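/- arXiv:1809.03057 — 2 statements merged into one kernel-verified Lean document; each statement's English description precedes it below -/
import Mathlib

section
/- The bootstrapped baseline-enhanced counterfactual value estimates are unbiased: for every information set I of player i, every action a ∈ A(I), and every baseline function b, E_{z∼ξ}[v̂_i^b(σ,I,a|z)] = v_i(σ,I,a). -/
open Finset

variable {A : Type*} [Fintype A] [DecidableEq A]

/-- The set of legal actions at history `h`: those `a` with `h ++ [a] ∈ H`. -/
def legal (H : Finset (List A)) (h : List A) : Finset A :=
  Finset.univ.filter fun a => h ++ [a] ∈ H

/-- Product of `f (h', a)` over all prefix steps `h'·a ⊑ h` of the history `h`.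
With `f = ξ` this is the sampling probability `q(h)`; note `pathProd f [] = 1`. -/
def pathProd (f : List A → A → ℝ) (h : List A) : ℝ :=
  ∏ k : Fin h.length, f (h.take (k : ℕ)) (h.get k)

/-- `π^σ(h, z)`: product of `σ (h', a)` over all prefix steps `h'·a` with `h ⊏ h'·a ⊑ z`. -/
def sfxProd (σ : List A → A → ℝ) (h z : List A) : ℝ :=
  ∏ k : Fin z.length, if h.length ≤ (k : ℕ) then σ (z.take (k : ℕ)) (z.get k) else 1

/-- `π^σ_{-i}(h)`: product of `σ (h', a)` over all prefix steps `h'·a ⊑ h` with `τ h' ≠ i`. -/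
def oppProd {N : Type*} [DecidableEq N] (σ : List A → A → ℝ) (τ : List A → N) (i : N)
    (h : List A) : ℝ :=
  ∏ k : Fin h.length, if τ (h.take (k : ℕ)) ≠ i then σ (h.take (k : ℕ)) (h.get k) else 1

/-- The expected value `u_i^σ(h) = Σ_{z ∈ Z, h ⊑ z} π^σ(h,z)·u_i(z)`. -/
def expUtil (σ : List A → A → ℝ) (u : List A → ℝ) (Z : Finset (List A)) (h : List A) : ℝ :=
  ∑ z ∈ Z.filter (fun z => h <+: z), sfxProd σ h z * u z

/-- The plain sampled history value `û_i(σ, h | z)`: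
`u_i(h)` if `h = z`, `Σ_{a ∈ A(h)} σ(h,a)·û_i(σ,h,a|z)` if `h ⊏ z`, and `0` otherwise,
where `û_i(σ,h,a|z) = û_i(σ,h·a|z)/ξ(h,a)` if `h·a ⊑ z` and `0` otherwise. -/
noncomputable def uhat (ξ σ : List A → A → ℝ) (u : List A → ℝ) (H : Finset (List A))
    (z : List A) (h : List A) : ℝ :=
  if h = z then u z
  else if h <+: z then
    ∑ a ∈ legal H h, σ h a *
      (if hpa : h ++ [a] <+: z then uhat ξ σ u H z (h ++ [a]) / ξ h a else 0)
  else 0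
termination_by z.length - h.length
decreasing_by
  have := hpa.length_le
  simp only [List.length_append, List.length_singleton] at this ⊢
  omega

/-- The plain sampled history-action value `û_i(σ, h, a | z)`. -/
noncomputable def uhatA (ξ σ : List A → A → ℝ) (u : List A → ℝ) (H : Finset (List A))
    (z : List A) (h : List A) (a : A) : ℝ :=
  if h ++ [a] <+: z then uhat ξ σ u H z (h ++ [a]) / ξ h a else 0

/-- The baseline-enhanced sampled history value `û_i^b(σ, h | z)`:
`u_i(h)` if `h = z`, `Σ_{a ∈ A(h)} σ(h,a)·û_i^b(σ,h,a|z)` if `h ⊏ z`, and `0` otherwise,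
where `û_i^b(σ,h,a|z) = b(h,a) + (û_i^b(σ,h·a|z) − b(h,a))/ξ(h,a)` if `h·a ⊑ z`,
`b(h,a)` if `h ⊏ z` and `h·a ⋢ z`, and `0` otherwise. -/
noncomputable def uhatB (ξ σ : List A → A → ℝ) (u : List A → ℝ) (H : Finset (List A))
    (b : List A → A → ℝ) (z : List A) (h : List A) : ℝ :=
  if h = z then u z
  else if h <+: z then
    ∑ a ∈ legal H h, σ h a *
      (if hpa : h ++ [a] <+: z then b h a + (uhatB ξ σ u H b z (h ++ [a]) - b h a) / ξ h a
       else b h a)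
  else 0
termination_by z.length - h.length
decreasing_by
  have := hpa.length_le
  simp only [List.length_append, List.length_singleton] at this ⊢
  omega

/-- The baseline-enhanced sampled history-action value `û_i^b(σ, h, a | z)`. -/
noncomputable def uhatBA (ξ σ : List A → A → ℝ) (u : List A → ℝ) (H : Finset (List A))
    (b : List A → A → ℝ) (z : List A) (h : List A) (a : A) : ℝ :=
  if h ++ [a] <+: z then b h a + (uhatB ξ σ u H b z (h ++ [a]) - b h a) / ξ h a
  else if h <+: z ∧ h ≠ z then b h a
  else 0

set_option linter.unusedSectionVars false

lemma take_of_prefix {h z : List A} (hp : h <+: z) : z.take h.length = h := by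
  obtain ⟨t, rfl⟩ := hp; simp

lemma length_lt_of_snoc_prefix {h z : List A} {a : A} (hp : h ++ [a] <+: z) :
    h.length < z.length := by
  have := hp.length_le; simp at this; omega

lemma get_of_snoc_prefix {h z : List A} {a : A} (hp : h ++ [a] <+: z)
    (hlt : h.length < z.length) : z.get ⟨h.length, hlt⟩ = a := by
  obtain ⟨t, rfl⟩ := hp
  have h1 : h.length < (h ++ [a]).length := by simp
  rw [List.get_eq_getElem, List.getElem_append_left h1]
  exact List.getElem_concat_length (l := h) (a := a) (i := h.length) rfl h1

noncomputable def pstep (f : List A → A → ℝ) (l : List A) (k : ℕ) : ℝ :=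
  if hk : k < l.length then f (l.take k) (l.get ⟨k, hk⟩) else 1

lemma pathProd_eq_prod_range (f : List A → A → ℝ) (l : List A) :
    pathProd f l = ∏ k ∈ Finset.range l.length, pstep f l k := by
  rw [pathProd, ← Fin.prod_univ_eq_prod_range]
  exact Finset.prod_congr rfl fun k _ => by simp [pstep, k.2]

lemma pathProd_snoc (f : List A → A → ℝ) (h : List A) (a : A) :
    pathProd f (h ++ [a]) = pathProd f h * f h a := by
  rw [pathProd_eq_prod_range, pathProd_eq_prod_range,
    (by simp : (h ++ [a]).length = h.length + 1), Finset.prod_range_succ]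
  congr 1
  · refine Finset.prod_congr rfl fun k hk => ?_
    have hk' := Finset.mem_range.mp hk
    have hk2 : k < (h ++ [a]).length := by simp only [List.length_append, List.length_singleton, Fin.ext_iff, Fin.val_mk]; omega
    rw [pstep, pstep, dif_pos hk2, dif_pos hk']
    rw [List.take_append_of_le_length hk'.le]
    congr 1
    simp [List.get_eq_getElem, List.getElem_append_left hk']
  · have hlt : h.length < (h ++ [a]).length := by simp
    rw [pstep, dif_pos hlt, take_of_prefix ⟨[a], rfl⟩,
      get_of_snoc_prefix (List.prefix_refl _) hlt]

lemma oppProd_eq_pathProd {N : Type*} [DecidableEq N] (σ : List A → A → ℝ) (τ : List A → N)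
    (i : N) (h : List A) :
    oppProd σ τ i h = pathProd (fun h' a => if τ h' ≠ i then σ h' a else 1) h := rfl

lemma sfxProd_eq_pathProd (σ : List A → A → ℝ) (h z : List A) :
    sfxProd σ h z = pathProd (fun h' a => if h.length ≤ h'.length then σ h' a else 1) z := by
  rw [sfxProd, pathProd]
  refine Finset.prod_congr rfl fun k _ => ?_
  have : (z.take (k : ℕ)).length = (k : ℕ) := by
    rw [List.length_take]; exact Nat.min_eq_left k.2.le
  rw [this]

lemma sfxProd_refl (σ : List A → A → ℝ) (z : List A) : sfxProd σ z z = 1 := by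
  rw [sfxProd]
  exact Finset.prod_eq_one fun k _ => if_neg (Nat.not_le.mpr k.2)

lemma sfxProd_snoc (σ : List A → A → ℝ) {h z : List A} {a : A} (hp : h ++ [a] <+: z) :
    sfxProd σ h z = σ h a * sfxProd σ (h ++ [a]) z := by
  have hlt : h.length < z.length := length_lt_of_snoc_prefix hp
  have hpre : h <+: z := (List.prefix_append h [a]).trans hp
  rw [sfxProd, sfxProd]
  have key : ∀ k : Fin z.length,
      (if h.length ≤ (k : ℕ) then σ (z.take (k : ℕ)) (z.get k) else 1)
        = (if k = ⟨h.length, hlt⟩ then σ h a else 1) *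
          (if (h ++ [a]).length ≤ (k : ℕ) then σ (z.take (k : ℕ)) (z.get k) else 1) := by
    intro k
    rcases lt_trichotomy (k : ℕ) h.length with hk | hk | hk
    · rw [if_neg (by omega), if_neg (by simp only [List.length_append, List.length_singleton, Fin.ext_iff, Fin.val_mk]; omega), if_neg (by simp only [List.length_append, List.length_singleton, Fin.ext_iff, Fin.val_mk]; omega),
        one_mul]
    · have hkk : k = ⟨h.length, hlt⟩ := Fin.ext hk
      subst hkk
      rw [if_pos (le_refl _), if_pos rfl, if_neg (by simp only [List.length_append, List.length_singleton, Fin.val_mk]; omega), mul_one,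
        take_of_prefix hpre, get_of_snoc_prefix hp hlt]
    · rw [if_pos (by omega), if_neg (by simp only [List.length_append, List.length_singleton, Fin.ext_iff, Fin.val_mk]; omega), if_pos (by simp only [List.length_append, List.length_singleton, Fin.ext_iff, Fin.val_mk]; omega),
        one_mul]
  rw [Finset.prod_congr rfl fun k _ => key k, Finset.prod_mul_distrib]
  congr 1
  simp


section helpers
variable {Z H : Finset (List A)}

lemma mem_legal_iff {H : Finset (List A)} {h : List A} {a : A} :
    a ∈ legal H h ↔ h ++ [a] ∈ H := by simp [legal]

lemma filter_prefix_singleton (hZH : Z ⊆ H)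
    (hterm : ∀ z ∈ Z, ∀ h ∈ H, z <+: h → z = h) {h : List A} (hz : h ∈ Z) :
    Z.filter (fun z => h <+: z) = {h} := by
  ext z
  simp only [Finset.mem_filter, Finset.mem_singleton]
  constructor
  · rintro ⟨hzZ, hpre⟩
    exact (hterm h hz z (hZH hzZ) hpre).symm
  · rintro rfl; exact ⟨hz, List.prefix_refl _⟩

lemma snoc_ne_of_snoc_prefix {h z : List A} {a : A} (hp : h ++ [a] <+: z) : h ≠ z := by
  rintro rfl
  have := hp.length_le; simp at this

lemma sum_partition (hZH : Z ⊆ H)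
    (hclosed : ∀ h ∈ H, ∀ h' : List A, h' <+: h → h' ∈ H)
    {h : List A} (hnZ : h ∉ Z) (F : List A → ℝ) :
    ∑ z ∈ Z.filter (fun z => h <+: z), F z
      = ∑ a ∈ legal H h, ∑ z ∈ Z.filter (fun z => h ++ [a] <+: z), F z := by
  rw [← Finset.sum_biUnion ?disj]
  case disj =>
    intro a _ a' _ hne
    refine Finset.disjoint_left.mpr fun z hz hz' => hne ?_
    simp only [Finset.mem_coe, Finset.mem_filter] at hz hz'
    obtain ⟨t, rfl⟩ := hz.2
    obtain ⟨t', he⟩ := hz'.2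
    rw [List.append_assoc, List.append_assoc] at he
    have := (List.append_cancel_left he)
    exact (List.cons.injEq _ _ _ _ ▸ this).1.symm ▸ rfl
  · congr 1
    ext z
    simp only [Finset.mem_biUnion, Finset.mem_filter, mem_legal_iff]
    constructor
    · rintro ⟨hzZ, hpre⟩
      obtain ⟨t, rfl⟩ := hpre
      match t with
      | [] => exact absurd hzZ (by simpa using hnZ)
      | c :: t' =>
        exact ⟨c, hclosed _ (hZH hzZ) _ ⟨t', by simp⟩, hzZ, ⟨t', by simp⟩⟩
    · rintro ⟨a, _, hzZ, hpre⟩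
      exact ⟨hzZ, (List.prefix_append h [a]).trans hpre⟩
end helpers


section mainlemmas
variable (Z H : Finset (List A))

lemma qsum_aux (hZH : Z ⊆ H)
    (hclosed : ∀ h ∈ H, ∀ h' : List A, h' <+: h → h' ∈ H)
    (hreach : ∀ h ∈ H, ∃ z ∈ Z, h <+: z)
    (hterm : ∀ z ∈ Z, ∀ h ∈ H, z <+: h → z = h)
    (ξ : List A → A → ℝ)
    (hξsum : ∀ h ∈ H, h ∉ Z → ∑ a ∈ legal H h, ξ h a = 1) :
    ∀ (n : ℕ) (h : List A), h ∈ H → (∀ z ∈ Z, h <+: z → z.length ≤ h.length + n) →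
      ∑ z ∈ Z.filter (fun z => h <+: z), pathProd ξ z = pathProd ξ h := by
  intro n
  induction n with
  | zero =>
    intro h hH hbound
    by_cases hz : h ∈ Z
    · rw [filter_prefix_singleton hZH hterm hz, Finset.sum_singleton]
    · obtain ⟨z, hzZ, hpre⟩ := hreach h hH
      have h1 := hbound z hzZ hpre
      have h2 := hpre.length_le
      have : h = z := hpre.eq_of_length (by omega)
      exact absurd (this ▸ hzZ) hz
  | succ n ih =>
    intro h hH hbound
    by_cases hz : h ∈ Z
    · rw [filter_prefix_singleton hZH hterm hz, Finset.sum_singleton]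
    · rw [sum_partition hZH hclosed hz]
      have step : ∀ a ∈ legal H h,
          ∑ z ∈ Z.filter (fun z => h ++ [a] <+: z), pathProd ξ z = pathProd ξ h * ξ h a := by
        intro a ha
        rw [← pathProd_snoc]
        refine ih (h ++ [a]) (mem_legal_iff.mp ha) fun z hzZ hpre => ?_
        have := hbound z hzZ ((List.prefix_append h [a]).trans hpre)
        simp only [List.length_append, List.length_singleton]
        omega
      rw [Finset.sum_congr rfl step, ← Finset.mul_sum, hξsum h hH hz, mul_one]

lemma qsum (hZH : Z ⊆ H)
    (hclosed : ∀ h ∈ H, ∀ h' : List A, h' <+: h → h' ∈ H)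
    (hreach : ∀ h ∈ H, ∃ z ∈ Z, h <+: z)
    (hterm : ∀ z ∈ Z, ∀ h ∈ H, z <+: h → z = h)
    (ξ : List A → A → ℝ)
    (hξsum : ∀ h ∈ H, h ∉ Z → ∑ a ∈ legal H h, ξ h a = 1)
    (h : List A) (hH : h ∈ H) :
    ∑ z ∈ Z.filter (fun z => h <+: z), pathProd ξ z = pathProd ξ h :=
  qsum_aux Z H hZH hclosed hreach hterm ξ hξsum (Z.sup List.length) h hH
    fun z hzZ _ => le_trans (Finset.le_sup (f := List.length) hzZ) (Nat.le_add_left _ _)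

lemma pathProd_pos (hZH : Z ⊆ H)
    (hclosed : ∀ h ∈ H, ∀ h' : List A, h' <+: h → h' ∈ H)
    (hterm : ∀ z ∈ Z, ∀ h ∈ H, z <+: h → z = h)
    (ξ : List A → A → ℝ)
    (hξpos : ∀ h ∈ H, h ∉ Z → ∀ a ∈ legal H h, 0 < ξ h a) :
    ∀ h, h ∈ H → 0 < pathProd ξ h := by
  intro h
  induction h using List.reverseRecOn with
  | nil => intro _; rw [pathProd]; simp
  | append_singleton h a ih =>
    intro hH
    have hh : h ∈ H := hclosed _ hH h (List.prefix_append h [a])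
    have hnz : h ∉ Z := fun hzz => by
      have := hterm h hzz (h ++ [a]) hH (List.prefix_append h [a])
      simp at this
    rw [pathProd_snoc]
    exact mul_pos (ih hh) (hξpos h hh hnz a (mem_legal_iff.mpr hH))

lemma expUtil_rec (hZH : Z ⊆ H)
    (hclosed : ∀ h ∈ H, ∀ h' : List A, h' <+: h → h' ∈ H)
    (σ : List A → A → ℝ) (u : List A → ℝ) {h : List A} (hnZ : h ∉ Z) :
    expUtil σ u Z h = ∑ a ∈ legal H h, σ h a * expUtil σ u Z (h ++ [a]) := by
  rw [expUtil, sum_partition hZH hclosed hnZ]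
  refine Finset.sum_congr rfl fun a ha => ?_
  rw [expUtil, Finset.mul_sum]
  refine Finset.sum_congr rfl fun z hzm => ?_
  rw [sfxProd_snoc σ (Finset.mem_filter.mp hzm).2, mul_assoc]

lemma inner_sum_eq (ξ : List A → A → ℝ) (G : List A → ℝ)
    (h : List A) (a : A) (c e q : ℝ) (hξ : ξ h a ≠ 0)
    (hq : ∑ z ∈ Z.filter (fun z => h <+: z), pathProd ξ z = q)
    (hqa : ∑ z ∈ Z.filter (fun z => h ++ [a] <+: z), pathProd ξ z = q * ξ h a)
    (hG : ∑ z ∈ Z.filter (fun z => h ++ [a] <+: z), pathProd ξ z * G z = q * ξ h a * e) :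
    ∑ z ∈ Z.filter (fun z => h <+: z),
        pathProd ξ z * (if h ++ [a] <+: z then c + (G z - c) / ξ h a else c)
      = q * e := by
  have hSS : (Z.filter (fun z => h <+: z)).filter (fun z => h ++ [a] <+: z)
      = Z.filter (fun z => h ++ [a] <+: z) := by
    rw [Finset.filter_filter]
    refine Finset.filter_congr fun z _ => ?_
    exact ⟨fun hx => hx.2, fun hx => ⟨(List.prefix_append h [a]).trans hx, hx⟩⟩
  have hsplit := Finset.sum_filter_add_sum_filter_not (Z.filter (fun z => h <+: z))
    (fun z => h ++ [a] <+: z) (pathProd ξ)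
  rw [hSS, hqa, hq] at hsplit
  rw [← Finset.sum_filter_add_sum_filter_not (Z.filter (fun z => h <+: z))
      (fun z => h ++ [a] <+: z)]
  have e1 : ∑ z ∈ (Z.filter (fun z => h <+: z)).filter (fun z => h ++ [a] <+: z),
      pathProd ξ z * (if h ++ [a] <+: z then c + (G z - c) / ξ h a else c)
      = q * ξ h a * c + (q * ξ h a * e) / ξ h a - (q * ξ h a * c) / ξ h a := by
    rw [hSS]
    have hterms : ∀ z ∈ Z.filter (fun z => h ++ [a] <+: z),
        pathProd ξ z * (if h ++ [a] <+: z then c + (G z - c) / ξ h a else c)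
          = pathProd ξ z * c + (pathProd ξ z * G z) / ξ h a - (pathProd ξ z * c) / ξ h a := by
      intro z hzm
      rw [if_pos (Finset.mem_filter.mp hzm).2]
      field_simp
      ring
    rw [Finset.sum_congr rfl hterms, Finset.sum_sub_distrib, Finset.sum_add_distrib,
      ← Finset.sum_div, ← Finset.sum_div, ← Finset.sum_mul, hqa, hG]
  have e2 : ∑ z ∈ (Z.filter (fun z => h <+: z)).filter (fun z => ¬ h ++ [a] <+: z),
      pathProd ξ z * (if h ++ [a] <+: z then c + (G z - c) / ξ h a else c)
      = (q - q * ξ h a) * c := by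
    have hterms : ∀ z ∈ (Z.filter (fun z => h <+: z)).filter (fun z => ¬ h ++ [a] <+: z),
        pathProd ξ z * (if h ++ [a] <+: z then c + (G z - c) / ξ h a else c)
          = pathProd ξ z * c := by
      intro z hzm
      rw [if_neg (Finset.mem_filter.mp hzm).2]
    rw [Finset.sum_congr rfl hterms, ← Finset.sum_mul]
    have : ∑ z ∈ (Z.filter (fun z => h <+: z)).filter (fun z => ¬ h ++ [a] <+: z),
        pathProd ξ z = q - q * ξ h a := by linarith
    rw [this]
  rw [e1, e2]
  field_simp
  ring

lemma uhatB_sum_aux (hZH : Z ⊆ H)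
    (hclosed : ∀ h ∈ H, ∀ h' : List A, h' <+: h → h' ∈ H)
    (hreach : ∀ h ∈ H, ∃ z ∈ Z, h <+: z)
    (hterm : ∀ z ∈ Z, ∀ h ∈ H, z <+: h → z = h)
    (ξ : List A → A → ℝ)
    (hξpos : ∀ h ∈ H, h ∉ Z → ∀ a ∈ legal H h, 0 < ξ h a)
    (hξsum : ∀ h ∈ H, h ∉ Z → ∑ a ∈ legal H h, ξ h a = 1)
    (σ : List A → A → ℝ) (u : List A → ℝ) (b : List A → A → ℝ) :
    ∀ (n : ℕ) (h : List A), h ∈ H → (∀ z ∈ Z, h <+: z → z.length ≤ h.length + n) →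
      ∑ z ∈ Z.filter (fun z => h <+: z), pathProd ξ z * uhatB ξ σ u H b z h
        = pathProd ξ h * expUtil σ u Z h := by
  intro n
  induction n with
  | zero =>
    intro h hH hbound
    by_cases hz : h ∈ Z
    · rw [filter_prefix_singleton hZH hterm hz, Finset.sum_singleton,
        expUtil, filter_prefix_singleton hZH hterm hz, Finset.sum_singleton,
        sfxProd_refl, one_mul]
      congr 1
      rw [uhatB, if_pos rfl]
    · obtain ⟨z, hzZ, hpre⟩ := hreach h hH
      have h1 := hbound z hzZ hpre
      have h2 := hpre.length_le
      have : h = z := hpre.eq_of_length (by omega)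
      exact absurd (this ▸ hzZ) hz
  | succ n ih =>
    intro h hH hbound
    by_cases hz : h ∈ Z
    · rw [filter_prefix_singleton hZH hterm hz, Finset.sum_singleton,
        expUtil, filter_prefix_singleton hZH hterm hz, Finset.sum_singleton,
        sfxProd_refl, one_mul]
      congr 1
      rw [uhatB, if_pos rfl]
    · have hXrw : ∀ z ∈ Z.filter (fun z => h <+: z),
          pathProd ξ z * uhatB ξ σ u H b z h
            = ∑ a ∈ legal H h, σ h a *
                (pathProd ξ z * (if h ++ [a] <+: z then
                    b h a + (uhatB ξ σ u H b z (h ++ [a]) - b h a) / ξ h a else b h a)) := by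
        intro z hzm
        obtain ⟨hzZ, hpre⟩ := Finset.mem_filter.mp hzm
        have hne : h ≠ z := fun e => hz (e ▸ hzZ)
        rw [uhatB, if_neg hne, if_pos hpre, Finset.mul_sum]
        refine Finset.sum_congr rfl fun a _ => ?_
        rw [dite_eq_ite]
        ring
      rw [Finset.sum_congr rfl hXrw, Finset.sum_comm]
      have key : ∀ a ∈ legal H h,
          ∑ z ∈ Z.filter (fun z => h <+: z),
              σ h a * (pathProd ξ z * (if h ++ [a] <+: z then
                  b h a + (uhatB ξ σ u H b z (h ++ [a]) - b h a) / ξ h a else b h a))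
            = σ h a * (pathProd ξ h * expUtil σ u Z (h ++ [a])) := by
        intro a ha
        rw [← Finset.mul_sum]
        congr 1
        have hmem : h ++ [a] ∈ H := mem_legal_iff.mp ha
        have hbound' : ∀ z ∈ Z, h ++ [a] <+: z → z.length ≤ (h ++ [a]).length + n := by
          intro z hzZ hp
          have := hbound z hzZ ((List.prefix_append h [a]).trans hp)
          simp only [List.length_append, List.length_singleton]
          omega
        refine inner_sum_eq Z ξ (fun z => uhatB ξ σ u H b z (h ++ [a])) h a (b h a)
          (expUtil σ u Z (h ++ [a])) (pathProd ξ h)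
          (ne_of_gt (hξpos h hH hz a ha))
          (qsum Z H hZH hclosed hreach hterm ξ hξsum h hH) ?_ ?_
        · rw [← pathProd_snoc]
          exact qsum_aux Z H hZH hclosed hreach hterm ξ hξsum n (h ++ [a]) hmem hbound'
        · rw [← pathProd_snoc]
          exact ih (h ++ [a]) hmem hbound'
      rw [Finset.sum_congr rfl key, expUtil_rec Z H hZH hclosed σ u hz, Finset.mul_sum]
      exact Finset.sum_congr rfl fun a _ => by ring

lemma uhatB_sum (hZH : Z ⊆ H)
    (hclosed : ∀ h ∈ H, ∀ h' : List A, h' <+: h → h' ∈ H)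
    (hreach : ∀ h ∈ H, ∃ z ∈ Z, h <+: z)
    (hterm : ∀ z ∈ Z, ∀ h ∈ H, z <+: h → z = h)
    (ξ : List A → A → ℝ)
    (hξpos : ∀ h ∈ H, h ∉ Z → ∀ a ∈ legal H h, 0 < ξ h a)
    (hξsum : ∀ h ∈ H, h ∉ Z → ∑ a ∈ legal H h, ξ h a = 1)
    (σ : List A → A → ℝ) (u : List A → ℝ) (b : List A → A → ℝ)
    (h : List A) (hH : h ∈ H) :
    ∑ z ∈ Z.filter (fun z => h <+: z), pathProd ξ z * uhatB ξ σ u H b z h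
      = pathProd ξ h * expUtil σ u Z h :=
  uhatB_sum_aux Z H hZH hclosed hreach hterm ξ hξpos hξsum σ u b (Z.sup List.length) h hH
    fun z hzZ _ => le_trans (Finset.le_sup (f := List.length) hzZ) (Nat.le_add_left _ _)

end mainlemmas


/-- **Unbiasedness of the bootstrapped baseline-enhanced counterfactual value estimates**
(Lemma 2 in the paper): for every information set `I` of player `i`, legal action `a`
at `I`, and baseline `b`, `E_{z∼ξ}[v̂_i^b(σ,I,a|z)] = v_i(σ,I,a)`. -/
theorem vr_mccfr_estimator_unbiased
    (H Z : Finset (List A))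
    (hempty : ([] : List A) ∈ H)
    (hclosed : ∀ h ∈ H, ∀ h' : List A, h' <+: h → h' ∈ H)
    (hZH : Z ⊆ H)
    (hreach : ∀ h ∈ H, ∃ z ∈ Z, h <+: z)
    (hterm : ∀ z ∈ Z, ∀ h ∈ H, z <+: h → z = h)
    (hlegal : ∀ h ∈ H, h ∉ Z → (legal H h).Nonempty)
    (ξ : List A → A → ℝ)
    (hξpos : ∀ h ∈ H, h ∉ Z → ∀ a ∈ legal H h, 0 < ξ h a)
    (hξsum : ∀ h ∈ H, h ∉ Z → ∑ a ∈ legal H h, ξ h a = 1)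
    (σ : List A → A → ℝ)
    (hσnn : ∀ h ∈ H, h ∉ Z → ∀ a ∈ legal H h, 0 ≤ σ h a)
    (hσsum : ∀ h ∈ H, h ∉ Z → ∑ a ∈ legal H h, σ h a = 1)
    {N : Type*} [DecidableEq N] (τ : List A → N) (i : N) (u : List A → ℝ)
    (I : Finset (List A))
    (hIH : ∀ h ∈ I, h ∈ H ∧ h ∉ Z ∧ τ h = i)
    (hIact : ∀ h ∈ I, ∀ h' ∈ I, legal H h = legal H h')
    (hIanti : ∀ h ∈ I, ∀ h' ∈ I, h <+: h' → h = h')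
    (b : List A → A → ℝ) (a : A) (haI : ∀ h ∈ I, a ∈ legal H h) :
    (∑ z ∈ Z, pathProd ξ z *
        ∑ h ∈ I.filter (fun h => h <+: z),
          oppProd σ τ i h / pathProd ξ h * uhatBA ξ σ u H b z h a)
      = ∑ h ∈ I, ∑ z ∈ Z.filter (fun z => h ++ [a] <+: z),
          oppProd σ τ i (h ++ [a]) * sfxProd σ (h ++ [a]) z * u z := by
  have swap : (∑ z ∈ Z, pathProd ξ z *
        ∑ h ∈ I.filter (fun h => h <+: z),
          oppProd σ τ i h / pathProd ξ h * uhatBA ξ σ u H b z h a)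
      = ∑ h ∈ I, ∑ z ∈ Z.filter (fun z => h <+: z),
          pathProd ξ z * (oppProd σ τ i h / pathProd ξ h * uhatBA ξ σ u H b z h a) := by
    simp only [Finset.sum_filter, Finset.mul_sum, mul_ite, mul_zero]
    exact Finset.sum_comm
  rw [swap]
  refine Finset.sum_congr rfl fun h hI => ?_
  obtain ⟨hH, hnZ, hτ⟩ := hIH h hI
  have ha := haI h hI
  have haH : h ++ [a] ∈ H := mem_legal_iff.mp ha
  have hqpos : 0 < pathProd ξ h := pathProd_pos Z H hZH hclosed hterm ξ hξpos h hH
  have hopp : oppProd σ τ i (h ++ [a]) = oppProd σ τ i h := by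
    rw [oppProd_eq_pathProd, oppProd_eq_pathProd, pathProd_snoc]
    simp [hτ]
  have hRHS : ∑ z ∈ Z.filter (fun z => h ++ [a] <+: z),
      oppProd σ τ i (h ++ [a]) * sfxProd σ (h ++ [a]) z * u z
      = oppProd σ τ i h * expUtil σ u Z (h ++ [a]) := by
    rw [hopp, expUtil, Finset.mul_sum]
    exact Finset.sum_congr rfl fun z _ => by ring
  rw [hRHS]
  have hBA : ∀ z ∈ Z.filter (fun z => h <+: z),
      pathProd ξ z * (oppProd σ τ i h / pathProd ξ h * uhatBA ξ σ u H b z h a)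
        = oppProd σ τ i h / pathProd ξ h *
          (pathProd ξ z * (if h ++ [a] <+: z then
              b h a + (uhatB ξ σ u H b z (h ++ [a]) - b h a) / ξ h a else b h a)) := by
    intro z hzm
    obtain ⟨hzZ, hpre⟩ := Finset.mem_filter.mp hzm
    have hne : h ≠ z := fun e => hnZ (e ▸ hzZ)
    simp only [uhatBA]
    by_cases hpa : h ++ [a] <+: z
    · rw [if_pos hpa, if_pos hpa]; ring
    · rw [if_neg hpa, if_neg hpa, if_pos ⟨hpre, hne⟩]; ring
  have hqa : ∑ z ∈ Z.filter (fun z => h ++ [a] <+: z), pathProd ξ z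
      = pathProd ξ h * ξ h a := by
    rw [← pathProd_snoc]
    exact qsum Z H hZH hclosed hreach hterm ξ hξsum (h ++ [a]) haH
  have hGB : ∑ z ∈ Z.filter (fun z => h ++ [a] <+: z),
      pathProd ξ z * uhatB ξ σ u H b z (h ++ [a])
      = pathProd ξ h * ξ h a * expUtil σ u Z (h ++ [a]) := by
    rw [← pathProd_snoc]
    exact uhatB_sum Z H hZH hclosed hreach hterm ξ hξpos hξsum σ u b (h ++ [a]) haH
  rw [Finset.sum_congr rfl hBA, ← Finset.mul_sum,
    inner_sum_eq Z ξ (fun z => uhatB ξ σ u H b z (h ++ [a])) h a (b h a)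
      (expUtil σ u Z (h ++ [a])) (pathProd ξ h) (ne_of_gt (hξpos h hH hnZ a ha))
      (qsum Z H hZH hclosed hreach hterm ξ hξsum h hH) hqa hGB]
  field_simp
end

section
/- Under the oracle baseline b* defined by b*(h,a) = u_i^σ(h·a), the baseline-enhanced sampled values are exact on the sampled trajectory: for every z ∈ Z, every nonterminal h ∈ H \ Z with h ⊏ z, and every a ∈ A(h), û_i^{b*}(σ,h,a|z) = u_i^σ(h·a); consequently also û_i^{b*}(σ,h|z) = u_i^σ(h) for every nonterminal h ⊏ z. -/
open Finset

variable {A : Type*} [Fintype A] [DecidableEq A]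

/-!
Along the sampled trajectory the oracle baseline `b*(h,a) = u^σ(h·a)` is exactly the value the
estimator tries to recover, so once `û(h·a)` is known to be exact the importance-weighted
correction `(û(h·a) - b*(h,a)) / ξ(h,a)` vanishes, while off the trajectory `û(h,a)` is `b*(h,a)`
itself. Since `u^σ` obeys the same one-step recursion `u^σ(h) = Σ_a σ(h,a) u^σ(h·a)` as the
estimator, exactness propagates from `z` up to every prefix of `z`.
-/

theorem List.IsPrefix.exists_append_singleton_prefix {α : Type*} {l₁ l₂ : List α}
    (hp : l₁ <+: l₂) (hne : l₁ ≠ l₂) : ∃ a, l₁ ++ [a] <+: l₂ := by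
  obtain ⟨_ | ⟨a, t⟩, rfl⟩ := hp
  · exact absurd (List.append_nil l₁).symm hne
  · exact ⟨a, t, by simp⟩

theorem List.eq_of_append_singleton_prefix {α : Type*} {l₁ l₂ : List α} {a b : α}
    (ha : l₁ ++ [a] <+: l₂) (hb : l₁ ++ [b] <+: l₂) : a = b := by
  obtain ⟨t, rfl⟩ := ha
  simpa [eq_comm] using hb

section SuffixProduct

omit [Fintype A] [DecidableEq A]

variable (σ : List A → A → ℝ)

theorem sfxProd_eq_prod_Ico (h z : List A) :
    sfxProd σ h z =
      ∏ k ∈ Ico h.length z.length, if hk : k < z.length then σ (z.take k) z[k] else 1 := by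
  set g : ℕ → ℝ := fun k => if hk : k < z.length then σ (z.take k) z[k] else 1
  calc sfxProd σ h z = ∏ k : Fin z.length, if h.length ≤ (k : ℕ) then g k else 1 := by
        refine prod_congr rfl fun k _ => ?_
        simp [g, k.isLt]
    _ = ∏ k ∈ range z.length, if h.length ≤ k then g k else 1 :=
        Fin.prod_univ_eq_prod_range (fun k => if h.length ≤ k then g k else 1) _
    _ = ∏ k ∈ Ico h.length z.length, g k := by
        rw [← prod_filter]
        congr 1
        ext k
        simp only [mem_filter, mem_range, mem_Ico]
        omega

theorem sfxProd_self (z : List A) : sfxProd σ z z = 1 := by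
  simp [sfxProd_eq_prod_Ico]

theorem sfxProd_of_append_singleton_prefix {h z : List A} {a : A} (hp : h ++ [a] <+: z) :
    sfxProd σ h z = σ h a * sfxProd σ (h ++ [a]) z := by
  obtain ⟨t, rfl⟩ := hp
  rw [sfxProd_eq_prod_Ico, sfxProd_eq_prod_Ico, prod_eq_prod_Ico_succ_bot (by simp)]
  simp

end SuffixProduct

section ExpectedUtility

variable (σ : List A → A → ℝ) (u : List A → ℝ) {H Z : Finset (List A)}

omit [Fintype A] in
theorem expUtil_of_mem (hZH : Z ⊆ H) (hterm : ∀ z ∈ Z, ∀ h ∈ H, z <+: h → z = h)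
    {z : List A} (hz : z ∈ Z) : expUtil σ u Z z = u z := by
  have hext : Z.filter (z <+: ·) = {z} := by
    ext w
    simp only [mem_filter, mem_singleton]
    exact ⟨fun ⟨hw, hzw⟩ => (hterm z hz w (hZH hw) hzw).symm,
      fun hw => hw.symm ▸ ⟨hz, List.prefix_refl z⟩⟩
  rw [expUtil, hext, sum_singleton, sfxProd_self, one_mul]

theorem filter_prefix_eq_biUnion_legal (hZH : Z ⊆ H)
    (hclosed : ∀ h ∈ H, ∀ h' : List A, h' <+: h → h' ∈ H) {h : List A} (hh : h ∉ Z) :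
    Z.filter (h <+: ·) = (legal H h).biUnion fun a => Z.filter (h ++ [a] <+: ·) := by
  ext z
  simp only [mem_filter, mem_biUnion, legal, mem_univ, true_and]
  constructor
  · rintro ⟨hz, hhz⟩
    obtain ⟨a, hza⟩ := hhz.exists_append_singleton_prefix fun he => hh (he ▸ hz)
    exact ⟨a, hclosed z (hZH hz) _ hza, hz, hza⟩
  · rintro ⟨a, -, hz, hza⟩
    exact ⟨hz, (List.prefix_append h [a]).trans hza⟩

theorem expUtil_eq_sum_legal (hZH : Z ⊆ H)
    (hclosed : ∀ h ∈ H, ∀ h' : List A, h' <+: h → h' ∈ H) {h : List A} (hh : h ∉ Z) :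
    expUtil σ u Z h = ∑ a ∈ legal H h, σ h a * expUtil σ u Z (h ++ [a]) := by
  have hdisj : (legal H h : Set A).PairwiseDisjoint fun a => Z.filter (h ++ [a] <+: ·) := by
    intro a _ b _ hab
    simp only [Function.onFun, disjoint_left, mem_filter]
    exact fun _ ha hb => hab (List.eq_of_append_singleton_prefix ha.2 hb.2)
  rw [expUtil, filter_prefix_eq_biUnion_legal hZH hclosed hh, sum_biUnion hdisj]
  refine sum_congr rfl fun a _ => ?_
  rw [expUtil, mul_sum]
  refine sum_congr rfl fun z hz => ?_
  rw [sfxProd_of_append_singleton_prefix σ (mem_filter.1 hz).2, mul_assoc]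

end ExpectedUtility

section SampledValues

variable {ξ σ : List A → A → ℝ} {u : List A → ℝ} {H : Finset (List A)} {b : List A → A → ℝ}
  {z h : List A}

theorem uhatB_of_prefix_of_ne (hp : h <+: z) (hne : h ≠ z) :
    uhatB ξ σ u H b z h = ∑ a ∈ legal H h, σ h a * uhatBA ξ σ u H b z h a := by
  rw [uhatB, if_neg hne, if_pos hp]
  refine sum_congr rfl fun a _ => ?_
  rw [uhatBA]
  split_ifs <;> tauto

theorem uhatBA_eq_baseline (hp : h <+: z) (hne : h ≠ z) {a : A}
    (hexact : h ++ [a] <+: z → uhatB ξ σ u H b z (h ++ [a]) = b h a) :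
    uhatBA ξ σ u H b z h a = b h a := by
  rw [uhatBA]
  split_ifs with ha hpz
  · rw [hexact ha, sub_self, zero_div, add_zero]
  · rfl
  · exact absurd ⟨hp, hne⟩ hpz

theorem uhatB_eq_of_value_recursion {V : List A → ℝ} (hVz : V z = u z)
    (hV : ∀ h, h <+: z → h ≠ z → V h = ∑ a ∈ legal H h, σ h a * V (h ++ [a]))
    (hp : h <+: z) : uhatB ξ σ u H (fun h' a' => V (h' ++ [a'])) z h = V h := by
  obtain ⟨t, ht⟩ := hp
  induction t generalizing h with
  | nil =>
    rw [List.append_nil] at ht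
    subst ht
    rw [uhatB, if_pos rfl, hVz]
  | cons a t ih =>
    have hp : h <+: z := ⟨_, ht⟩
    have hne : h ≠ z := fun he => by simp [he] at ht
    rw [uhatB_of_prefix_of_ne hp hne, hV h hp hne]
    refine sum_congr rfl fun c _ => congrArg _ <| uhatBA_eq_baseline hp hne fun hc => ?_
    obtain rfl : a = c := List.eq_of_append_singleton_prefix ⟨t, by simpa using ht⟩ hc
    exact ih (by simpa using ht)

end SampledValues

theorem oracle_baseline_exact_general
    (H Z : Finset (List A))
    (hclosed : ∀ h ∈ H, ∀ h' : List A, h' <+: h → h' ∈ H)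
    (hZH : Z ⊆ H)
    (hterm : ∀ z ∈ Z, ∀ h ∈ H, z <+: h → z = h)
    (ξ : List A → A → ℝ)
    (σ : List A → A → ℝ)
    (u : List A → ℝ) :
    ∀ z ∈ Z, ∀ h ∈ H, h ∉ Z → h <+: z → h ≠ z →
      (∀ a ∈ legal H h,
        uhatBA ξ σ u H (fun h' a' => expUtil σ u Z (h' ++ [a'])) z h a
          = expUtil σ u Z (h ++ [a])) ∧
      uhatB ξ σ u H (fun h' a' => expUtil σ u Z (h' ++ [a'])) z h = expUtil σ u Z h := by
  intro z hz h _ _ hp hne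
  have hVz : expUtil σ u Z z = u z := expUtil_of_mem σ u hZH hterm hz
  have hV : ∀ h', h' <+: z → h' ≠ z →
      expUtil σ u Z h' = ∑ a ∈ legal H h', σ h' a * expUtil σ u Z (h' ++ [a]) :=
    fun h' hp' hne' => expUtil_eq_sum_legal σ u hZH hclosed
      fun hZ => hne' (hterm h' hZ z (hZH hz) hp')
  exact ⟨fun a _ => uhatBA_eq_baseline hp hne
      fun ha => uhatB_eq_of_value_recursion hVz hV ha,
    uhatB_eq_of_value_recursion hVz hV hp⟩

/-- **The oracle baseline gives exact values on the sampled trajectory**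
(Lemma 7 in the paper). Under the oracle baseline `b*(h,a) = u_i^σ(h·a)`, for every
`z ∈ Z` and nonterminal `h ∈ H \ Z` with `h ⊏ z`: `û_i^{b*}(σ,h,a|z) = u_i^σ(h·a)`
for every `a ∈ A(h)`, and consequently `û_i^{b*}(σ,h|z) = u_i^σ(h)`. -/
theorem oracle_baseline_exact
    (H Z : Finset (List A))
    (hempty : ([] : List A) ∈ H)
    (hclosed : ∀ h ∈ H, ∀ h' : List A, h' <+: h → h' ∈ H)
    (hZH : Z ⊆ H)
    (hreach : ∀ h ∈ H, ∃ z ∈ Z, h <+: z)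
    (hterm : ∀ z ∈ Z, ∀ h ∈ H, z <+: h → z = h)
    (hlegal : ∀ h ∈ H, h ∉ Z → (legal H h).Nonempty)
    (ξ : List A → A → ℝ)
    (hξpos : ∀ h ∈ H, h ∉ Z → ∀ a ∈ legal H h, 0 < ξ h a)
    (hξsum : ∀ h ∈ H, h ∉ Z → ∑ a ∈ legal H h, ξ h a = 1)
    (σ : List A → A → ℝ)
    (hσnn : ∀ h ∈ H, h ∉ Z → ∀ a ∈ legal H h, 0 ≤ σ h a)
    (hσsum : ∀ h ∈ H, h ∉ Z → ∑ a ∈ legal H h, σ h a = 1)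
    (u : List A → ℝ) :
    ∀ z ∈ Z, ∀ h ∈ H, h ∉ Z → h <+: z → h ≠ z →
      (∀ a ∈ legal H h,
        uhatBA ξ σ u H (fun h' a' => expUtil σ u Z (h' ++ [a'])) z h a
          = expUtil σ u Z (h ++ [a])) ∧
      uhatB ξ σ u H (fun h' a' => expUtil σ u Z (h' ++ [a'])) z h = expUtil σ u Z h :=
  oracle_baseline_exact_general H Z hclosed hZH hterm ξ σ u
end
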